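/- arXiv:1412.3987 — 4 statements merged into one kernel-verified Lean document; each statement's English description precedes it below -/
import Mathlib

section
/- Let P ⊆ ℝ^d be a polytope having the origin 0 as a vertex, and let D be a finite set of nonzero vectors such that every edge direction of P is a positive scalar multiple of some element of D. For each e ∈ D set t*(e) = sup{t ≥ 0 : t·e ∈ P}, and let V_cone = {t*(e)·e : e ∈ D, t*(e) > 0}. Assume that every q ∈ V_cone has last coordinate q_d ≥ 1. Then for every w ∈ ℝ^d with w ≠ 0: the segment [0,w] is an edge of P if and only if w ∈ V_cone and (1/w_d)·w is an extreme point of the set cone(V_cone) ∩ {x ∈ ℝ^d : x_d = 1}. -/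
open scoped BigOperators

/-- A polytope in `ℝ^d`: the convex hull of a nonempty finite set of points. -/
def IsPolytope {d : ℕ} (P : Set (EuclideanSpace ℝ (Fin d))) : Prop :=
  ∃ S : Finset (EuclideanSpace ℝ (Fin d)), S.Nonempty ∧ P = convexHull ℝ (S : Set (EuclideanSpace ℝ (Fin d)))

/-- The segment `[v,w]` with `v ≠ w` is an edge of `P`, i.e. a face of `P`
(faces are extreme subsets). -/
def IsEdge {d : ℕ} (P : Set (EuclideanSpace ℝ (Fin d)))
    (v w : EuclideanSpace ℝ (Fin d)) : Prop :=
  v ≠ w ∧ IsExtreme ℝ P (segment ℝ v w)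

/-- `e` is an edge direction of `P`: a positive scalar multiple of `w - v`
for some edge `[v,w]` of `P`. -/
def IsEdgeDir {d : ℕ} (P : Set (EuclideanSpace ℝ (Fin d)))
    (e : EuclideanSpace ℝ (Fin d)) : Prop :=
  ∃ v w, IsEdge P v w ∧ ∃ t : ℝ, 0 < t ∧ e = t • (w - v)

/-- `coneOf V`: all nonnegative (finite) linear combinations of elements of `V`. -/
def coneOf {d : ℕ} (V : Set (EuclideanSpace ℝ (Fin d))) : Set (EuclideanSpace ℝ (Fin d)) :=
  {x | ∃ (s : Finset (EuclideanSpace ℝ (Fin d))) (c : EuclideanSpace ℝ (Fin d) → ℝ),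
    ↑s ⊆ V ∧ (∀ v ∈ s, 0 ≤ c v) ∧ x = ∑ v ∈ s, c v • v}

/-!
Write `C = cone(V_cone)` and `f` for the last coordinate: `f` is positive on `C \ {0}`, which
contains `P \ {0}`, so `x ↦ x / f x` maps `P \ {0}` into the base `C ∩ {f = 1}`.

The core criterion: if `f` is positive on `P \ {0}` and `B` contains every `x / f x`, then an open
segment of `P` meeting the ray of an extreme point `b` of `B` has its endpoints on that ray, so
the farthest point of `P` on that ray spans an edge at `0`. This gives "⇐". For "⇒", an edge
`[0, w]` points along some `e ∈ D` and ends at `t*(e) e`; an open segment of the base through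
`w / w_d`, shrunk into `P`, would cross the edge.

The inclusion `P ⊆ C` uses the criterion once more, with `f` a functional separating the vertex
`0` from the other generators `s` of `P`: by Krein–Milman the base `conv {s / f s}` is the hull
of its extreme points, whose rays carry edges of `P` at `0`, i.e. points of `V_cone`.
-/

open Set

section Ray

variable {E : Type*} [AddCommGroup E] [Module ℝ E]

lemma segment_zero_eq_image (y : E) : segment ℝ 0 y = (fun c : ℝ => c • y) '' Icc 0 1 := by
  simp [segment_eq_image]

lemma openSegment_zero_eq_image (y : E) :
    openSegment ℝ 0 y = (fun c : ℝ => c • y) '' Ioo 0 1 := by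
  simp [openSegment_eq_image]

lemma image_smul_right_segment (e : E) (a b : ℝ) :
    (· • e) '' segment ℝ a b = segment ℝ (a • e) (b • e) :=
  image_segment ℝ (LinearMap.toSpanSingleton ℝ E e).toAffineMap a b

lemma smul_mem_segment_zero_iff {e : E} (he : e ≠ 0) {s t : ℝ} (ht : 0 ≤ t) :
    s • e ∈ segment ℝ 0 (t • e) ↔ s ∈ Icc 0 t := by
  rw [← zero_smul ℝ e, ← image_smul_right_segment, (smul_left_injective ℝ he).mem_set_image,
    segment_eq_Icc ht]

lemma StarConvex.smul_mem_of_le {P : Set E} (hP : StarConvex ℝ 0 P) {y : E} {δ ε : ℝ}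
    (hδ : 0 < δ) (hy : δ • y ∈ P) (hε : 0 ≤ ε) (hεδ : ε ≤ δ) : ε • y ∈ P := by
  simpa [smul_smul, div_mul_cancel₀ _ hδ.ne'] using
    hP.smul_mem hy (div_nonneg hε hδ.le) ((div_le_one hδ).2 hεδ)

lemma IsGreatest.ray_smul {P : Set E} {e : E} {τ : ℝ}
    (h : IsGreatest {s : ℝ | 0 ≤ s ∧ s • e ∈ P} τ) (hτ : 0 < τ) :
    IsGreatest {s : ℝ | 0 ≤ s ∧ s • τ • e ∈ P} 1 := by
  refine ⟨⟨zero_le_one, by simpa using h.1.2⟩, fun s ⟨hs, hsP⟩ => ?_⟩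
  have : s * τ ≤ τ := h.2 ⟨mul_nonneg hs hτ.le, by rwa [mul_smul]⟩
  nlinarith

lemma isGreatest_of_isExtreme_segment {P : Set E} {e : E} {t : ℝ} (he : e ≠ 0) (ht : 0 < t)
    (h0 : (0 : E) ∈ P) (h : IsExtreme ℝ P (segment ℝ 0 (t • e))) :
    IsGreatest {s : ℝ | 0 ≤ s ∧ s • e ∈ P} t := by
  refine ⟨⟨ht.le, h.1 (right_mem_segment _ _ _)⟩, fun s ⟨hs, hsP⟩ => ?_⟩
  by_contra! hts
  have hs0 : 0 < s := ht.trans hts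
  have hopen : t • e ∈ openSegment ℝ (s • e) 0 := by
    rw [openSegment_symm, openSegment_zero_eq_image]
    refine ⟨t / s, ⟨div_pos ht hs0, (div_lt_one hs0).2 hts⟩, ?_⟩
    simp only [smul_smul, div_mul_cancel₀ _ hs0.ne']
  have := h.left_mem_of_mem_openSegment hsP h0 (right_mem_segment _ _ _) hopen
  exact hts.not_ge ((smul_mem_segment_zero_iff he ht.le).1 this).2

end Ray

lemma isGreatest_sSup_ray {E : Type*} [NormedAddCommGroup E] [NormedSpace ℝ E] {P : Set E}
    (hP : IsCompact P) (h0 : (0 : E) ∈ P) {e : E} (he : e ≠ 0) :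
    IsGreatest {t : ℝ | 0 ≤ t ∧ t • e ∈ P} (sSup {t : ℝ | 0 ≤ t ∧ t • e ∈ P}) := by
  refine IsCompact.isGreatest_sSup ?_ ⟨0, le_rfl, by rwa [zero_smul]⟩
  obtain ⟨R, hR⟩ := hP.isBounded.exists_norm_le
  refine Metric.isCompact_of_isClosed_isBounded
    (isClosed_Ici.inter (hP.isClosed.preimage (continuous_id.smul continuous_const)))
    (Metric.isBounded_Icc 0 (R / ‖e‖) |>.subset fun t ⟨ht, htP⟩ => ⟨ht, ?_⟩)
  rw [le_div_iff₀ (norm_pos_iff.2 he)]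
  simpa [norm_smul, abs_of_nonneg ht] using hR _ htP

section Perspective

variable {E : Type*} [AddCommGroup E] [Module ℝ E] (f : E →ₗ[ℝ] ℝ)

lemma inv_smul_apply_smul {c : ℝ} (hc : c ≠ 0) (x : E) :
    (f (c • x))⁻¹ • c • x = (f x)⁻¹ • x := by
  rw [map_smul, smul_eq_mul, smul_smul]
  congr 1
  field_simp

lemma inv_smul_mem_openSegment {x y z : E} (hx : 0 < f x) (hy : 0 < f y)
    (hz : z ∈ openSegment ℝ x y) :
    (f z)⁻¹ • z ∈ openSegment ℝ ((f x)⁻¹ • x) ((f y)⁻¹ • y) := by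
  obtain ⟨a, b, ha, hb, hab, rfl⟩ := hz
  have hF : 0 < a * f x + b * f y := by positivity
  refine ⟨a * f x / (a * f x + b * f y), b * f y / (a * f x + b * f y), by positivity,
    by positivity, by field_simp, ?_⟩
  simp only [map_add, map_smul, smul_eq_mul, smul_smul, smul_add]
  congr 2 <;> field_simp

lemma pos_and_inv_smul_mem_convexHull {s : Set E} (hs : ∀ x ∈ s, x ≠ 0 → 0 < f x) {y : E}
    (hy : y ∈ convexHull ℝ s) (hy0 : y ≠ 0) :
    0 < f y ∧ (f y)⁻¹ • y ∈ convexHull ℝ ((fun x => (f x)⁻¹ • x) '' (s \ {0})) := by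
  set T := {y : E | y ≠ 0 →
    0 < f y ∧ (f y)⁻¹ • y ∈ convexHull ℝ ((fun x => (f x)⁻¹ • x) '' (s \ {0}))}
  have hT0 : ∀ y ∈ T, openSegment ℝ 0 y ⊆ T := by
    intro y hy z hz hz0
    rw [openSegment_zero_eq_image] at hz
    obtain ⟨c, ⟨hc, -⟩, rfl⟩ := hz
    obtain ⟨hfy, hyB⟩ := hy (right_ne_zero_of_smul hz0)
    refine ⟨?_, by rwa [inv_smul_apply_smul f hc.ne']⟩
    simpa [map_smul] using mul_pos hc hfy
  have hTconv : Convex ℝ T := by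
    refine convex_iff_openSegment_subset.2 fun x hx y hy z hz hz0 => ?_
    rcases eq_or_ne x 0 with rfl | hx0
    · exact hT0 y hy hz hz0
    rcases eq_or_ne y 0 with rfl | hy0
    · exact hT0 x hx (openSegment_symm ℝ x 0 ▸ hz) hz0
    obtain ⟨hfx, hxB⟩ := hx hx0
    obtain ⟨hfy, hyB⟩ := hy hy0
    exact ⟨(convex_halfSpace_gt f.isLinear 0).openSegment_subset hfx hfy hz,
      (convex_convexHull ℝ _).openSegment_subset hxB hyB (inv_smul_mem_openSegment f hfx hfy hz)⟩
  exact convexHull_min (fun x hx hx0 => ⟨hs x hx hx0, subset_convexHull ℝ _ ⟨x, ⟨hx, hx0⟩, rfl⟩⟩)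
    hTconv hy hy0

variable {P B : Set E}

lemma eq_apply_smul_of_mem_openSegment (hf : ∀ x ∈ P, x ≠ 0 → 0 < f x)
    (hB : ∀ x ∈ P, x ≠ 0 → (f x)⁻¹ • x ∈ B) {b : E} (hb : b ∈ B.extremePoints ℝ)
    {x₁ x₂ z : E} (hx₁ : x₁ ∈ P) (hx₂ : x₂ ∈ P) (hz : z ∈ openSegment ℝ x₁ x₂)
    (hzb : z = f z • b) : x₁ = f x₁ • b := by
  rcases eq_or_ne x₁ 0 with rfl | h₁
  · simp
  rcases eq_or_ne x₂ 0 with rfl | h₂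
  · obtain ⟨a, c, ha, -, -, rfl⟩ := hz
    simp only [smul_zero, add_zero, map_smul, smul_eq_mul, mul_smul] at hzb
    exact smul_right_injective E ha.ne' hzb
  have hfz : 0 < f z :=
    (convex_halfSpace_gt f.isLinear 0).openSegment_subset (hf x₁ hx₁ h₁) (hf x₂ hx₂ h₂) hz
  have hbz : (f z)⁻¹ • z = b := by
    calc (f z)⁻¹ • z = (f z)⁻¹ • f z • b := congrArg _ hzb
      _ = b := inv_smul_smul₀ hfz.ne' b
  have := hb.2 (hB x₁ hx₁ h₁) (hB x₂ hx₂ h₂)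
    (hbz ▸ inv_smul_mem_openSegment f (hf x₁ hx₁ h₁) (hf x₂ hx₂ h₂) hz)
  rw [← this, smul_inv_smul₀ (hf x₁ hx₁ h₁).ne']

theorem isExtreme_segment_zero_of_mem_extremePoints (hP : Convex ℝ P) (h0 : (0 : E) ∈ P)
    (hf : ∀ x ∈ P, x ≠ 0 → 0 < f x) (hB : ∀ x ∈ P, x ≠ 0 → (f x)⁻¹ • x ∈ B) {w : E}
    (hw : IsGreatest {s : ℝ | 0 ≤ s ∧ s • w ∈ P} 1) (hwB : (f w)⁻¹ • w ∈ B.extremePoints ℝ) :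
    IsExtreme ℝ P (segment ℝ 0 w) := by
  have hwP : w ∈ P := by simpa using hw.1.2
  have hw0 : w ≠ 0 := by
    rintro rfl
    have := hw.2 ⟨zero_le_two, by rwa [smul_zero]⟩
    norm_num at this
  have hfw : 0 < f w := hf w hwP hw0
  have hf0 : ∀ x ∈ P, 0 ≤ f x := fun x hx => by
    rcases eq_or_ne x 0 with rfl | hx0
    exacts [(map_zero f).ge, (hf x hx hx0).le]
  refine ⟨hP.segment_subset h0 hwP, fun x₁ hx₁ x₂ hx₂ z hz hz₁₂ => ?_⟩
  rw [segment_zero_eq_image] at hz ⊢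
  obtain ⟨c, -, rfl⟩ := hz
  have h₁ := eq_apply_smul_of_mem_openSegment f hf hB hwB hx₁ hx₂ hz₁₂
    (by simp [smul_smul, hfw.ne'])
  rw [smul_smul, ← div_eq_mul_inv] at h₁
  have hle : f x₁ / f w ≤ 1 := hw.2 ⟨div_nonneg (hf0 x₁ hx₁) hfw.le, by rwa [← h₁]⟩
  exact ⟨_, ⟨div_nonneg (hf0 x₁ hx₁) hfw.le, hle⟩, h₁.symm⟩

theorem inv_smul_mem_extremePoints_of_isExtreme {C : PointedCone ℝ E} (hP : Convex ℝ P)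
    (h0 : (0 : E) ∈ P) (hCP : ∀ y ∈ C, ∃ ε : ℝ, 0 < ε ∧ ε • y ∈ P) {w : E} (hwC : w ∈ C)
    (hfw : 0 < f w) (hw : IsExtreme ℝ P (segment ℝ 0 w)) :
    (f w)⁻¹ • w ∈ ((C : Set E) ∩ {y | f y = 1}).extremePoints ℝ := by
  refine ⟨⟨C.smul_mem (inv_nonneg.2 hfw.le) hwC, by simp [hfw.ne']⟩, ?_⟩
  rintro y₁ ⟨hy₁C, hy₁⟩ y₂ ⟨hy₂C, -⟩ hy
  obtain ⟨ε₁, hε₁, h₁⟩ := hCP y₁ hy₁C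
  obtain ⟨ε₂, hε₂, h₂⟩ := hCP y₂ hy₂C
  set ε := min (min ε₁ ε₂) (f w)
  have hε : 0 < ε := lt_min (lt_min hε₁ hε₂) hfw
  have hεy₁ : ε • y₁ ∈ P := (hP.starConvex h0).smul_mem_of_le hε₁ h₁ hε.le
    ((min_le_left _ _).trans (min_le_left _ _))
  have hεy₂ : ε • y₂ ∈ P := (hP.starConvex h0).smul_mem_of_le hε₂ h₂ hε.le
    ((min_le_left _ _).trans (min_le_right _ _))
  have hseg : (ε * (f w)⁻¹) • w ∈ openSegment ℝ (ε • y₁) (ε • y₂) := by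
    obtain ⟨a, b, ha, hb, hab, h⟩ := hy
    exact ⟨a, b, ha, hb, hab, by rw [smul_comm a ε, smul_comm b ε, ← smul_add, h, smul_smul]⟩
  have hray : (ε * (f w)⁻¹) • w ∈ segment ℝ 0 w := by
    rw [segment_zero_eq_image]
    exact ⟨_, ⟨by positivity, by rw [← div_eq_mul_inv, div_le_one hfw]; exact min_le_right _ _⟩,
      rfl⟩
  have hmem := hw.left_mem_of_mem_openSegment hεy₁ hεy₂ hray hseg
  rw [segment_zero_eq_image] at hmem
  obtain ⟨c, -, hc⟩ := hmem
  have hfy₁ : f y₁ = 1 := hy₁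
  have hc0 : c ≠ 0 := by
    rintro rfl
    have := congrArg f hc
    simp only [zero_smul, map_zero, map_smul, hfy₁, smul_eq_mul, mul_one] at this
    exact hε.ne this
  calc y₁ = (f (ε • y₁))⁻¹ • ε • y₁ := by rw [inv_smul_apply_smul f hε.ne', hfy₁, inv_one, one_smul]
    _ = (f w)⁻¹ • w := by rw [← hc, inv_smul_apply_smul f hc0]

end Perspective

section ConeHull

variable {E : Type*} [AddCommGroup E] [Module ℝ E] {V : Set E}

lemma eq_zero_or_pos_of_mem_hull {f : E →ₗ[ℝ] ℝ} (hV : ∀ v ∈ V, 0 < f v) {x : E}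
    (hx : x ∈ PointedCone.hull ℝ V) : x = 0 ∨ 0 < f x := by
  induction hx using Submodule.span_induction with
  | mem v hv => exact .inr (hV v hv)
  | zero => exact .inl rfl
  | add x y _ _ hx hy =>
    rcases hx with rfl | hx
    · simpa using hy
    rcases hy with rfl | hy
    · simpa using Or.inr hx
    exact .inr (by rw [map_add]; positivity)
  | smul c x _ hx =>
    obtain ⟨c, hc⟩ := c
    rcases hx with rfl | hx
    · simp
    rcases hc.eq_or_lt with rfl | hc
    · simp
    exact .inr (by simp only [Nonneg.mk_smul, map_smul, smul_eq_mul]; positivity)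

lemma exists_pos_smul_mem_of_mem_hull {P : Set E} (hP : Convex ℝ P) (h0 : (0 : E) ∈ P)
    (hV : V ⊆ P) {x : E} (hx : x ∈ PointedCone.hull ℝ V) : ∃ ε : ℝ, 0 < ε ∧ ε • x ∈ P := by
  have hle : PointedCone.hull ℝ V ≤
      (ConvexCone.hull ℝ P).toPointedCone (ConvexCone.subset_hull h0) :=
    Submodule.span_le.2 (hV.trans ConvexCone.subset_hull)
  obtain ⟨r, hr, y, hy, rfl⟩ := (ConvexCone.mem_hull_of_convex hP).1 (hle hx)
  exact ⟨r⁻¹, inv_pos.2 hr, by rwa [inv_smul_smul₀ hr.ne']⟩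

end ConeHull

lemma coneOf_eq_hull {n : ℕ} (V : Set (EuclideanSpace ℝ (Fin n))) :
    coneOf V = PointedCone.hull ℝ V := by
  ext x
  constructor
  · rintro ⟨s, c, hsV, hc, rfl⟩
    exact Submodule.sum_mem _ fun v hv =>
      (PointedCone.hull ℝ V).smul_mem (hc v hv) (PointedCone.subset_hull (hsV hv))
  · intro hx
    obtain ⟨c, hcV, hc, rfl⟩ := PointedCone.mem_hull_set.1 hx
    exact ⟨c.support, c, hcV, fun v _ => hc v, rfl⟩

section Polytope

variable {n : ℕ} {P : Set (EuclideanSpace ℝ (Fin n))}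

lemma IsPolytope.convex (hP : IsPolytope P) : Convex ℝ P := by
  obtain ⟨S, -, rfl⟩ := hP
  exact convex_convexHull ℝ _

lemma IsPolytope.isCompact (hP : IsPolytope P) : IsCompact P := by
  obtain ⟨S, -, rfl⟩ := hP
  exact S.finite_toSet.isCompact_convexHull ℝ

lemma mem_hull_isEdge_of_mem_extremePoints (hP : IsPolytope P)
    (h0 : (0 : EuclideanSpace ℝ (Fin n)) ∈ P) {f : EuclideanSpace ℝ (Fin n) →ₗ[ℝ] ℝ}
    {B : Set (EuclideanSpace ℝ (Fin n))} (hf : ∀ x ∈ P, x ≠ 0 → 0 < f x)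
    (hB : ∀ x ∈ P, x ≠ 0 → (f x)⁻¹ • x ∈ B) {b : EuclideanSpace ℝ (Fin n)}
    (hb : b ∈ B.extremePoints ℝ) (hfb : f b = 1) {t : ℝ} (ht : 0 < t) (htb : t • b ∈ P) :
    b ∈ PointedCone.hull ℝ {w | IsEdge P 0 w} := by
  have hb0 : b ≠ 0 := by rintro rfl; simp at hfb
  have hτ := isGreatest_sSup_ray hP.isCompact h0 hb0
  set τ := sSup {s : ℝ | 0 ≤ s ∧ s • b ∈ P}
  have hτpos : 0 < τ := ht.trans_le (hτ.2 ⟨ht.le, htb⟩)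
  have hedge : IsEdge P 0 (τ • b) :=
    ⟨(smul_ne_zero hτpos.ne' hb0).symm, isExtreme_segment_zero_of_mem_extremePoints f hP.convex
      h0 hf hB (hτ.ray_smul hτpos) (by rwa [inv_smul_apply_smul f hτpos.ne', hfb, inv_one,
        one_smul])⟩
  rw [← inv_smul_smul₀ hτpos.ne' b]
  exact (PointedCone.hull ℝ _).smul_mem (inv_nonneg.2 hτpos.le) (PointedCone.subset_hull hedge)

theorem IsPolytope.subset_hull_isEdge (hP : IsPolytope P)
    (h0 : (0 : EuclideanSpace ℝ (Fin n)) ∈ P.extremePoints ℝ) :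
    P ⊆ PointedCone.hull ℝ {w | IsEdge P 0 w} := by
  obtain ⟨S, hSne, rfl⟩ := hP
  set S' := (S : Set (EuclideanSpace ℝ (Fin n))) \ {0}
  have h0S' : (0 : EuclideanSpace ℝ (Fin n)) ∉ convexHull ℝ S' := fun h =>
    (extremePoints_convexHull_subset (inter_extremePoints_subset_extremePoints_of_subset
      (convexHull_mono sdiff_subset) ⟨h, h0⟩)).2 rfl
  obtain ⟨φ, u, hu, hφ⟩ := geometric_hahn_banach_point_closed (convex_convexHull ℝ S')
    (S.finite_toSet.sdiff.isClosed_convexHull ℝ) h0S'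
  set f : EuclideanSpace ℝ (Fin n) →ₗ[ℝ] ℝ := φ.toLinearMap
  have hpos : ∀ x ∈ (S : Set (EuclideanSpace ℝ (Fin n))), x ≠ 0 → 0 < f x := fun x hx hx0 =>
    (map_zero φ ▸ hu).trans (hφ x (subset_convexHull ℝ _ ⟨hx, hx0⟩))
  set B := convexHull ℝ ((fun x => (f x)⁻¹ • x) '' S')
  have hPB := fun x hx hx0 => pos_and_inv_smul_mem_convexHull f hpos (y := x) hx hx0
  have hext : B.extremePoints ℝ ⊆
      (PointedCone.hull ℝ {w | IsEdge (convexHull ℝ (S : Set (EuclideanSpace ℝ (Fin n)))) 0 w} :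
        Set (EuclideanSpace ℝ (Fin n))) := by
    intro b hb
    obtain ⟨s, ⟨hsS, hs0⟩, rfl⟩ := extremePoints_convexHull_subset hb
    have hfs := hpos s hsS hs0
    exact mem_hull_isEdge_of_mem_extremePoints ⟨S, hSne, rfl⟩ h0.1
      (fun x hx hx0 => (hPB x hx hx0).1) (fun x hx hx0 => (hPB x hx hx0).2) hb (by simp [hfs.ne']) hfs
      (by simpa [hfs.ne'] using subset_convexHull ℝ _ hsS)
  have hBext : convexHull ℝ (B.extremePoints ℝ) = B := by
    have hfin : (B.extremePoints ℝ).Finite :=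
      (S.finite_toSet.sdiff.image _).subset extremePoints_convexHull_subset
    rw [← (hfin.isClosed_convexHull ℝ).closure_eq, closure_convexHull_extremePoints
      ((S.finite_toSet.sdiff.image _).isCompact_convexHull ℝ) (convex_convexHull ℝ _)]
  intro x hx
  rcases eq_or_ne x 0 with rfl | hx0
  · exact zero_mem _
  obtain ⟨hfx, hxB⟩ := hPB x hx hx0
  rw [← smul_inv_smul₀ hfx.ne' x]
  exact (PointedCone.hull ℝ _).smul_mem hfx.le
    (convexHull_min hext (PointedCone.convex _) (hBext.symm ▸ hxB))

lemma exists_mem_eq_sSup_smul_of_isEdge (h0 : (0 : EuclideanSpace ℝ (Fin n)) ∈ P)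
    {D : Finset (EuclideanSpace ℝ (Fin n))} (hD0 : ∀ e ∈ D, e ≠ 0)
    (hDdir : ∀ e, IsEdgeDir P e → ∃ u ∈ D, ∃ t : ℝ, 0 < t ∧ e = t • u)
    {w : EuclideanSpace ℝ (Fin n)} (hw : IsEdge P 0 w) :
    ∃ e ∈ D, 0 < sSup {t : ℝ | 0 ≤ t ∧ t • e ∈ P} ∧ w = sSup {t : ℝ | 0 ≤ t ∧ t • e ∈ P} • e := by
  obtain ⟨e, he, t, ht, rfl⟩ := hDdir w ⟨0, w, hw, 1, one_pos, by simp⟩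
  have hmax := (isGreatest_of_isExtreme_segment (hD0 e he) ht h0 hw.2).csSup_eq
  exact ⟨e, he, by rwa [hmax], by rw [hmax]⟩

end Polytope

theorem edge_skeleton_extremal_ray_characterization {d : ℕ}
    (P : Set (EuclideanSpace ℝ (Fin (d + 1)))) (hP : IsPolytope P)
    (h0 : (0 : EuclideanSpace ℝ (Fin (d + 1))) ∈ Set.extremePoints ℝ P)
    (D : Finset (EuclideanSpace ℝ (Fin (d + 1))))
    (hD0 : ∀ e ∈ D, e ≠ 0)
    (hDdir : ∀ e, IsEdgeDir P e → ∃ u ∈ D, ∃ t : ℝ, 0 < t ∧ e = t • u)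
    (tstar : EuclideanSpace ℝ (Fin (d + 1)) → ℝ)
    (htstar : ∀ e, tstar e = sSup {t : ℝ | 0 ≤ t ∧ t • e ∈ P})
    (Vcone : Set (EuclideanSpace ℝ (Fin (d + 1))))
    (hVcone : Vcone = {q | ∃ e ∈ D, 0 < tstar e ∧ q = tstar e • e})
    (hlast : ∀ q ∈ Vcone, 1 ≤ q (Fin.last d)) :
    ∀ w : EuclideanSpace ℝ (Fin (d + 1)), w ≠ 0 →
      (IsEdge P 0 w ↔
        w ∈ Vcone ∧
          (w (Fin.last d))⁻¹ • w ∈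
            Set.extremePoints ℝ (coneOf Vcone ∩ {x | x (Fin.last d) = 1})) := by
  intro w hw
  set f := (EuclideanSpace.proj (Fin.last d) : EuclideanSpace ℝ (Fin (d + 1)) →L[ℝ] ℝ).toLinearMap
  obtain rfl : tstar = _ := funext htstar
  have hedgeV : ∀ w, IsEdge P 0 w → w ∈ Vcone := fun w hw =>
    hVcone ▸ exists_mem_eq_sSup_smul_of_isEdge h0.1 hD0 hDdir hw
  have hVmax : ∀ q ∈ Vcone, IsGreatest {s : ℝ | 0 ≤ s ∧ s • q ∈ P} 1 := by
    rw [hVcone]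
    rintro _ ⟨e, he, hpos, rfl⟩
    exact (isGreatest_sSup_ray hP.isCompact h0.1 (hD0 e he)).ray_smul hpos
  have hVP : Vcone ⊆ P := fun q hq => by simpa using (hVmax q hq).1.2
  have hPC : P ⊆ PointedCone.hull ℝ Vcone :=
    (hP.subset_hull_isEdge h0).trans (Submodule.span_mono hedgeV)
  have hf : ∀ x ∈ P, x ≠ 0 → 0 < f x := fun x hx => (eq_zero_or_pos_of_mem_hull
    (fun q hq => one_pos.trans_le (hlast q hq)) (hPC hx)).resolve_left
  rw [coneOf_eq_hull]
  constructor
  · intro hedge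
    have hwV := hedgeV w hedge
    exact ⟨hwV, inv_smul_mem_extremePoints_of_isExtreme f hP.convex h0.1
      (fun y hy => exists_pos_smul_mem_of_mem_hull hP.convex h0.1 hVP hy)
      (PointedCone.subset_hull hwV) (hf w (hVP hwV) hw) hedge.2⟩
  · rintro ⟨hwV, hext⟩
    refine ⟨hw.symm, isExtreme_segment_zero_of_mem_extremePoints f hP.convex h0.1 hf ?_
      (hVmax w hwV) hext⟩
    intro x hx hx0
    exact ⟨(PointedCone.hull ℝ Vcone).smul_mem (inv_nonneg.2 (hf x hx hx0).le) (hPC hx),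
      inv_mul_cancel₀ (hf x hx hx0).ne'⟩
end

section
/- Let P ⊆ ℝ^d be a polytope and let v be a vertex of P. Then P ⊆ v + cone({w − v : w is a vertex of P adjacent to v}), i.e. every point of P is v plus a nonnegative linear combination of the edge vectors at v. -/
open scoped BigOperators

/-!
Translate so that `v` sits at the origin: `P - v` lies in the cone `K` spanned by the finitely
many vectors `s - v`, where `s ≠ v` runs over a generating set of `P`. Since `v` is extreme, `0` is
not in the convex hull of these vectors, so a linear functional `f` is positive on them. The section
`B = K ∩ {f = 1}` is a polytope and `K = ℝ≥0 • B`, so `K` is spanned by the extreme points of `B`.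
For such an extreme point `b` the ray `ℝ≥0 • b` is a face of `K`, hence the points of `P` on
`v + ℝ≥0 • b` form a face of `P`; by compactness this face is a segment `[v, w]` with `w ≠ v`,
i.e. an edge at `v`, and `b` is a positive multiple of `w - v`.
-/

open Set Pointwise

namespace PointedCone

variable {E : Type*} [AddCommGroup E] [Module ℝ E]

lemma mem_hull_singleton {b x : E} : x ∈ hull ℝ {b} ↔ ∃ t : ℝ, 0 ≤ t ∧ t • b = x := by
  rw [Submodule.mem_span_singleton]
  constructor
  · rintro ⟨a, rfl⟩
    exact ⟨a, a.2, rfl⟩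
  · rintro ⟨t, ht, rfl⟩
    exact ⟨⟨t, ht⟩, rfl⟩

lemma convexHull_subset_hull (s : Set E) : convexHull ℝ s ⊆ hull ℝ s :=
  convexHull_min subset_hull (hull ℝ s).convex

end PointedCone

section ConeBase

variable {E : Type*} [AddCommGroup E] [Module ℝ E] {T : Set E} {f : E →ₗ[ℝ] ℝ}

/-- When `f` is positive on `T`, this is the section of `PointedCone.hull ℝ T` by `f = 1`. -/
def coneBase (T : Set E) (f : E →ₗ[ℝ] ℝ) : Set E :=
  convexHull ℝ ((fun g ↦ (f g)⁻¹ • g) '' T)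

lemma coneBase_subset_hull (hf : ∀ g ∈ T, 0 < f g) : coneBase T f ⊆ PointedCone.hull ℝ T := by
  refine convexHull_min ?_ (PointedCone.hull ℝ T).convex
  rintro _ ⟨g, hg, rfl⟩
  exact (PointedCone.hull ℝ T).smul_mem (inv_nonneg.2 (hf g hg).le) (PointedCone.subset_hull hg)

lemma map_eq_one_of_mem_coneBase (hf : ∀ g ∈ T, 0 < f g) {c : E} (hc : c ∈ coneBase T f) :
    f c = 1 := by
  refine convexHull_min ?_ ((convex_singleton 1).linear_preimage f) hc
  rintro _ ⟨g, hg, rfl⟩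
  simp [(hf g hg).ne']

lemma eq_zero_or_exists_pos_smul_mem_coneBase (hf : ∀ g ∈ T, 0 < f g) {x : E}
    (hx : x ∈ PointedCone.hull ℝ T) : x = 0 ∨ ∃ s : ℝ, 0 < s ∧ ∃ c ∈ coneBase T f, x = s • c := by
  obtain ⟨c, hcT, hc0, rfl⟩ := PointedCone.mem_hull_set.1 hx
  rcases c.support.eq_empty_or_nonempty with h | h
  · simp [Finsupp.sum, h]
  have hw : ∀ g ∈ c.support, 0 < c g * f g := fun g hg ↦
    mul_pos ((hc0 g).lt_of_ne' (Finsupp.mem_support_iff.1 hg)) (hf g (hcT hg))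
  have hsum := Finset.sum_pos hw h
  refine .inr ⟨_, hsum, _, c.support.centerMass_mem_convexHull (fun g hg ↦ (hw g hg).le) hsum
    fun g hg ↦ mem_image_of_mem (fun g ↦ (f g)⁻¹ • g) (hcT hg), ?_⟩
  rw [Finset.centerMass, smul_inv_smul₀ hsum.ne', Finsupp.sum]
  refine Finset.sum_congr rfl fun g hg ↦ ?_
  rw [smul_smul, mul_assoc, mul_inv_cancel₀ (hf g (hcT hg)).ne', mul_one]

lemma hull_singleton_isFaceOf_hull (hf : ∀ g ∈ T, 0 < f g) {b : E}
    (hb : b ∈ (coneBase T f).extremePoints ℝ) :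
    (PointedCone.hull ℝ {b}).IsFaceOf (PointedCone.hull ℝ T) := by
  have hb1 : f b = 1 := map_eq_one_of_mem_coneBase hf hb.1
  refine .of_mem_of_add_mem_left
    (Submodule.span_le.2 (singleton_subset_iff.2 (coneBase_subset_hull hf hb.1)))
    fun {x y} hx hy hxy ↦ ?_
  obtain ⟨t, -, ht⟩ := PointedCone.mem_hull_singleton.1 hxy
  rcases eq_zero_or_exists_pos_smul_mem_coneBase hf hx with rfl | ⟨s₁, hs₁, c₁, hc₁, rfl⟩
  · exact zero_mem _
  rcases eq_zero_or_exists_pos_smul_mem_coneBase hf hy with rfl | ⟨s₂, hs₂, c₂, hc₂, rfl⟩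
  · simpa using hxy
  have hts : t = s₁ + s₂ := by
    simpa [hb1, map_eq_one_of_mem_coneBase hf hc₁, map_eq_one_of_mem_coneBase hf hc₂]
      using congrArg f ht
  have ht0 : 0 < t := hts ▸ add_pos hs₁ hs₂
  have hbc : b ∈ openSegment ℝ c₁ c₂ := by
    refine ⟨s₁ / t, s₂ / t, div_pos hs₁ ht0, div_pos hs₂ ht0, by field_simp; exact hts.symm, ?_⟩
    rw [div_eq_inv_mul, div_eq_inv_mul, mul_smul, mul_smul, ← smul_add, ← ht,
      inv_smul_smul₀ ht0.ne']
  rw [hb.2 hc₁ hc₂ hbc]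
  exact PointedCone.mem_hull_singleton.2 ⟨s₁, hs₁.le, rfl⟩

end ConeBase

lemma IsExtreme.inter_preimage_sub {E : Type*} [AddCommGroup E] [Module ℝ E] {K R P : Set E}
    {v : E} (hKR : IsExtreme ℝ K R) (hPK : ∀ p ∈ P, p - v ∈ K) :
    IsExtreme ℝ P (P ∩ (· - v) ⁻¹' R) := by
  refine ⟨inter_subset_left, fun x hx y hy z hz hzxy ↦ ⟨hx, ?_⟩⟩
  refine hKR.left_mem_of_mem_openSegment (hPK x hx) (hPK y hy) hz.2 ?_
  rw [← mem_openSegment_translate ℝ v]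
  simpa using hzxy

section Vertex

variable {E : Type*} [AddCommGroup E] [Module ℝ E] {S : Set E} {v : E}

lemma sub_mem_hull_of_mem_convexHull {x : E} (hx : x ∈ convexHull ℝ S) :
    x - v ∈ PointedCone.hull ℝ (-v +ᵥ (S \ {v})) := by
  suffices convexHull ℝ S ⊆ (· - v) ⁻¹' PointedCone.hull ℝ (-v +ᵥ (S \ {v})) from this hx
  refine convexHull_min (fun s hs ↦ ?_) ?_
  · by_cases hsv : s = v
    · simp [hsv]
    · exact PointedCone.subset_hull ⟨s, ⟨hs, hsv⟩, by simp [sub_eq_neg_add]⟩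
  · simpa [sub_eq_neg_add] using
      (PointedCone.hull ℝ (-v +ᵥ (S \ {v}))).convex.translate_preimage_right (-v)

lemma zero_notMem_convexHull_of_mem_extremePoints (hv : v ∈ (convexHull ℝ S).extremePoints ℝ) :
    (0 : E) ∉ convexHull ℝ (-v +ᵥ (S \ {v})) := by
  rw [convexHull_vadd, mem_vadd_set_iff_neg_vadd_mem, vadd_eq_add, neg_neg, add_zero]
  rw [(convex_convexHull ℝ S).mem_extremePoints_iff_mem_sdiff_convexHull_sdiff] at hv
  exact fun h ↦ hv.2 (convexHull_mono (sdiff_subset_sdiff_left (subset_convexHull ℝ S)) h)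

end Vertex

section Normed

variable {E : Type*} [NormedAddCommGroup E] [NormedSpace ℝ E]

lemma Set.Finite.convexHull_extremePoints_convexHull {A : Set E} (hA : A.Finite) :
    convexHull ℝ ((convexHull ℝ A).extremePoints ℝ) = convexHull ℝ A := by
  have hext := hA.subset (extremePoints_convexHull_subset (𝕜 := ℝ))
  rw [← (hext.isCompact_convexHull ℝ).isClosed.closure_eq]
  exact closure_convexHull_extremePoints (hA.isCompact_convexHull ℝ) (convex_convexHull ℝ A)

lemma exists_pos_of_zero_notMem_convexHull {T : Set E} (hT : T.Finite)
    (h0 : (0 : E) ∉ convexHull ℝ T) : ∃ f : StrongDual ℝ E, ∀ g ∈ T, 0 < f g := by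
  obtain ⟨f, u, hu, hf⟩ := geometric_hahn_banach_point_closed (convex_convexHull ℝ T)
    (hT.isCompact_convexHull ℝ).isClosed h0
  exact ⟨f, fun g hg ↦ (map_zero f ▸ hu).trans (hf g (subset_convexHull ℝ T hg))⟩

lemma hull_le_hull_extremePoints_coneBase {T : Set E} (hT : T.Finite) {f : E →ₗ[ℝ] ℝ}
    (hf : ∀ g ∈ T, 0 < f g) :
    PointedCone.hull ℝ T ≤ PointedCone.hull ℝ ((coneBase T f).extremePoints ℝ) := by
  intro x hx
  rcases eq_zero_or_exists_pos_smul_mem_coneBase hf hx with rfl | ⟨s, hs, c, hc, rfl⟩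
  · exact zero_mem _
  refine PointedCone.smul_mem _ hs.le (PointedCone.convexHull_subset_hull _ ?_)
  rwa [coneBase, (hT.image _).convexHull_extremePoints_convexHull]

lemma exists_inter_ray_eq_segment {P : Set E} (hPc : IsCompact P) (hP : Convex ℝ P) {v b : E}
    (hv : v ∈ P) (hb : b ≠ 0) {ε : ℝ} (hε : 0 < ε) (hεP : v + ε • b ∈ P) :
    ∃ t : ℝ, 0 < t ∧ P ∩ (· - v) ⁻¹' PointedCone.hull ℝ {b} = segment ℝ v (v + t • b) := by
  set A := {t : ℝ | 0 ≤ t ∧ v + t • b ∈ P}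
  have hA_closed : IsClosed A := isClosed_Ici.inter (hPc.isClosed.preimage (by fun_prop))
  have hA_bdd : BddAbove A := by
    obtain ⟨r, hr⟩ := hPc.isBounded.exists_norm_le
    refine ⟨(r + ‖v‖) / ‖b‖, fun t ⟨ht, htP⟩ ↦ ?_⟩
    rw [le_div_iff₀ (norm_pos_iff.2 hb)]
    calc t * ‖b‖ = ‖(v + t • b) - v‖ := by simp [norm_smul, abs_of_nonneg ht]
      _ ≤ ‖v + t • b‖ + ‖v‖ := norm_sub_le _ _
      _ ≤ r + ‖v‖ := by gcongr; exact hr _ htP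
  have hmax : sSup A ∈ A := hA_closed.csSup_mem ⟨ε, hε.le, hεP⟩ hA_bdd
  have hpos : 0 < sSup A := hε.trans_le (le_csSup hA_bdd ⟨hε.le, hεP⟩)
  refine ⟨sSup A, hpos, Subset.antisymm ?_ fun p hp ↦ ⟨hP.segment_subset hv hmax.2 hp, ?_⟩⟩
  · rintro p ⟨hp, hpv⟩
    obtain ⟨s, hs, hsp⟩ := PointedCone.mem_hull_singleton.1 hpv
    rw [eq_sub_iff_add_eq'] at hsp
    subst hsp
    rw [segment_eq_image']
    refine ⟨s / sSup A, ⟨by positivity, (div_le_one hpos).2 (le_csSup hA_bdd ⟨hs, hp⟩)⟩, ?_⟩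
    simp [smul_smul, div_mul_cancel₀ _ hpos.ne']
  · rw [segment_eq_image'] at hp
    obtain ⟨θ, ⟨hθ, -⟩, rfl⟩ := hp
    exact PointedCone.mem_hull_singleton.2 ⟨θ * sSup A, by positivity, by simp [smul_smul]⟩

lemma exists_isExtreme_segment_of_mem_extremePoints_coneBase {P T : Set E} (hPc : IsCompact P)
    (hP : Convex ℝ P) {v : E} (hv : v ∈ P) {f : E →ₗ[ℝ] ℝ} (hf : ∀ g ∈ T, 0 < f g)
    (hPT : ∀ p ∈ P, p - v ∈ PointedCone.hull ℝ T) {b : E}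
    (hb : b ∈ (coneBase T f).extremePoints ℝ) {ε : ℝ} (hε : 0 < ε) (hεP : v + ε • b ∈ P) :
    ∃ w, v ≠ w ∧ IsExtreme ℝ P (segment ℝ v w) ∧ b ∈ PointedCone.hull ℝ {w - v} := by
  have hb0 : b ≠ 0 := by
    rintro rfl
    simpa using map_eq_one_of_mem_coneBase hf hb.1
  obtain ⟨t, ht, hseg⟩ := exists_inter_ray_eq_segment hPc hP hv hb0 hε hεP
  refine ⟨v + t • b, by simp [ht.ne', hb0], ?_, ?_⟩
  · rw [← hseg]
    exact (hull_singleton_isFaceOf_hull hf hb).isExtreme.inter_preimage_sub hPT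
  · exact PointedCone.mem_hull_singleton.2 ⟨t⁻¹, by positivity, by simp [smul_smul, ht.ne']⟩

lemma exists_edge_of_mem_extremePoints_coneBase {S : Set E} (hS : S.Finite) {v : E}
    (hv : v ∈ (convexHull ℝ S).extremePoints ℝ) {f : E →ₗ[ℝ] ℝ}
    (hf : ∀ g ∈ -v +ᵥ (S \ {v}), 0 < f g) {b : E}
    (hb : b ∈ (coneBase (-v +ᵥ (S \ {v})) f).extremePoints ℝ) :
    ∃ w, v ≠ w ∧ IsExtreme ℝ (convexHull ℝ S) (segment ℝ v w) ∧
      b ∈ PointedCone.hull ℝ {w - v} := by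
  obtain ⟨g, ⟨s, ⟨hs, hsv⟩, rfl⟩, rfl⟩ := extremePoints_convexHull_subset hb
  have hg := hf _ ⟨s, ⟨hs, hsv⟩, rfl⟩
  have hgS : v + f (-v +ᵥ s) • (f (-v +ᵥ s))⁻¹ • (-v +ᵥ s) ∈ convexHull ℝ S := by
    rw [smul_inv_smul₀ hg.ne', vadd_eq_add, add_neg_cancel_left]
    exact subset_convexHull ℝ _ hs
  exact exists_isExtreme_segment_of_mem_extremePoints_coneBase (hS.isCompact_convexHull ℝ)
    (convex_convexHull ℝ _) hv.1 hf (fun _ ↦ sub_mem_hull_of_mem_convexHull) hb hg hgS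

end Normed

lemma hull_subset_coneOf {d : ℕ} (V : Set (EuclideanSpace ℝ (Fin d))) :
    (PointedCone.hull ℝ V : Set (EuclideanSpace ℝ (Fin d))) ⊆ coneOf V := by
  intro x hx
  obtain ⟨c, hcV, hc0, rfl⟩ := PointedCone.mem_hull_set.1 hx
  exact ⟨c.support, c, hcV, fun y _ ↦ hc0 y, rfl⟩

theorem polytope_subset_vertex_cone {d : ℕ}
    (P : Set (EuclideanSpace ℝ (Fin d))) (hP : IsPolytope P)
    (v : EuclideanSpace ℝ (Fin d)) (hv : v ∈ Set.extremePoints ℝ P) :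
    ∀ x ∈ P, x - v ∈ coneOf {u | ∃ w, IsEdge P v w ∧ u = w - v} := by
  obtain ⟨S, -, rfl⟩ := hP
  have hT : (-v +ᵥ ((S : Set (EuclideanSpace ℝ (Fin d))) \ {v})).Finite :=
    S.finite_toSet.sdiff.vadd_set
  obtain ⟨f, hf⟩ := exists_pos_of_zero_notMem_convexHull hT
    (zero_notMem_convexHull_of_mem_extremePoints hv)
  intro x hx
  refine hull_subset_coneOf _ (Submodule.span_le.2 (fun b hb ↦ ?_)
    (hull_le_hull_extremePoints_coneBase hT hf (sub_mem_hull_of_mem_convexHull hx)))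
  obtain ⟨w, hvw, hw, hbw⟩ := exists_edge_of_mem_extremePoints_coneBase S.finite_toSet hv hf hb
  refine Submodule.span_mono ?_ hbw
  exact singleton_subset_iff.2 ⟨w, ⟨hvw, hw⟩, rfl⟩
end

section
/- Let A, B, C ⊆ ℝ^d be polytopes with A = B + C (Minkowski sum), i.e. C is the Minkowski difference A − B. Then every edge direction of C is also an edge direction of A. -/
/-!
Let `[v, w]` be an edge of `C = conv S_C`. Separating `v` from the closed convex set
`conv (S_C \ [v, w]) + ℝ (w - v)` gives a functional `l₁` whose face on `C` is exactly `[v, w]`.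
The `l₁`-face of `B` is a polytope `B₀`; if `P` is the orthogonal projection killing `w - v` and
`q = P b` has maximal norm among the vertices `b` of `B₀`, then `l₂ = ⟪q, P ·⟫` vanishes on `w - v`
and its face on `B₀` lies on a line parallel to `w - v`. For small `ε > 0` the face of a polytope in
direction `l₁ + ε l₂` is the `l₂`-face of its `l₁`-face, so the face of `B + C` in that direction is
a compact convex subset of a line parallel to `w - v` containing a translate of `[v, w]`: an edge of
`B + C` with direction `w - v`.
-/

open scoped Pointwise

open Set Filter Topology

section Extreme

variable {E : Type*} [AddCommGroup E] [Module ℝ E]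

theorem IsExtreme.inter_convexHull_subset {C F s : Set E} (hC : Convex ℝ C)
    (hF : IsExtreme ℝ C F) (hs : s ⊆ C) : F ∩ convexHull ℝ s ⊆ convexHull ℝ (s ∩ F) := by
  classical
  have hfin : ∀ t : Finset E, ↑t ⊆ C → F ∩ convexHull ℝ ↑t ⊆ convexHull ℝ (↑t ∩ F) := by
    intro t
    induction t using Finset.induction_on with
    | empty => simp
    | insert a t _ ih =>
      rintro htC y ⟨hyF, hy⟩
      rw [Finset.coe_insert, insert_subset_iff] at htC
      rw [Finset.coe_insert] at hy ⊢
      have haF : a ∈ F → a ∈ convexHull ℝ (insert a ↑t ∩ F) := fun haF =>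
        subset_convexHull ℝ _ ⟨mem_insert a _, haF⟩
      have hmono : convexHull ℝ (↑t ∩ F) ⊆ convexHull ℝ (insert a ↑t ∩ F) :=
        convexHull_mono (inter_subset_inter_left _ (subset_insert a _))
      rcases t.eq_empty_or_nonempty with rfl | ht
      · obtain rfl : y = a := by simpa using hy
        exact haF hyF
      rw [convexHull_insert (Finset.coe_nonempty.2 ht), mem_convexJoin] at hy
      obtain ⟨_, rfl, z, hz, hyz⟩ := hy
      have hzC : z ∈ C := convexHull_min htC.2 hC hz
      rw [← insert_endpoints_openSegment] at hyz
      rcases hyz with rfl | rfl | hyz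
      · exact haF hyF
      · exact hmono (ih htC.2 ⟨hyF, hz⟩)
      · exact (convex_convexHull ℝ _).openSegment_subset
          (haF (hF.left_mem_of_mem_openSegment htC.1 hzC hyF hyz))
          (hmono (ih htC.2 ⟨hF.right_mem_of_mem_openSegment htC.1 hzC hyF hyz, hz⟩)) hyz
  rintro y ⟨hyF, hy⟩
  rw [convexHull_eq_union_convexHull_finite_subsets, mem_iUnion₂] at hy
  obtain ⟨t, hts, hyt⟩ := hy
  exact convexHull_mono (inter_subset_inter_left _ hts) (hfin t (hts.trans hs) ⟨hyF, hyt⟩)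

theorem IsExtreme.mem_segment_of_mem_line {C : Set E} {v w : E}
    (hext : IsExtreme ℝ C (segment ℝ v w)) {r : ℝ} (hr : v + r • (w - v) ∈ C) :
    v + r • (w - v) ∈ segment ℝ v w := by
  have hv : v ∈ C := hext.subset (left_mem_segment ℝ v w)
  have hw : w ∈ C := hext.subset (right_mem_segment ℝ v w)
  rcases lt_or_ge r 0 with hr0 | hr0
  · have hvo : v ∈ openSegment ℝ (v + r • (w - v)) w := by
      rw [openSegment_eq_image']
      refine ⟨-r / (1 - r), ⟨div_pos (by linarith) (by linarith),
        by rw [div_lt_one] <;> linarith⟩, ?_⟩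
      have : w - (v + r • (w - v)) = (1 - r) • (w - v) := by module
      simp only [this, smul_smul, div_mul_cancel₀ _ (by linarith : (1 - r : ℝ) ≠ 0)]
      module
    exact hext.left_mem_of_mem_openSegment hr hw (left_mem_segment ℝ v w) hvo
  rcases le_or_gt r 1 with hr1 | hr1
  · rw [segment_eq_image']
    exact ⟨r, ⟨hr0, hr1⟩, rfl⟩
  · have hwo : w ∈ openSegment ℝ v (v + r • (w - v)) := by
      rw [openSegment_eq_image']
      refine ⟨r⁻¹, ⟨by positivity, inv_lt_one_of_one_lt₀ hr1⟩, ?_⟩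
      simp only [add_sub_cancel_left, smul_smul, inv_mul_cancel₀ (by linarith : r ≠ 0), one_smul]
      abel
    exact hext.right_mem_of_mem_openSegment hv hr (right_mem_segment ℝ v w) hwo

end Extreme

namespace ContinuousLinearMap

variable {E : Type*} [AddCommGroup E] [TopologicalSpace E] [Module ℝ E]

theorem le_of_mem_convexHull {l : StrongDual ℝ E} {s : Set E} {a : ℝ} (h : ∀ y ∈ s, l y ≤ a)
    {x : E} (hx : x ∈ convexHull ℝ s) : l x ≤ a :=
  convexHull_min h (convex_halfSpace_le (l : E →ₗ[ℝ] ℝ).isLinear a) hx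

theorem apply_eq_of_mem_segment {l : StrongDual ℝ E} {v w x : E} (h : l (w - v) = 0)
    (hx : x ∈ segment ℝ v w) : l x = l v := by
  rw [segment_eq_image'] at hx
  obtain ⟨r, -, rfl⟩ := hx
  simp [h]

theorem toExposed_eq_self_of_forall_eq {l : StrongDual ℝ E} {s : Set E}
    (h : ∀ x ∈ s, ∀ y ∈ s, l x = l y) :
    l.toExposed s = s :=
  subset_antisymm (fun _ hx => hx.1) fun x hx => ⟨hx, fun y hy => (h y hy x hx).le⟩

theorem toExposed_add (l : StrongDual ℝ E) (A B : Set E) :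
    l.toExposed (A + B) = l.toExposed A + l.toExposed B := by
  ext x
  constructor
  · rintro ⟨⟨a, ha, b, hb, rfl⟩, hmax⟩
    refine ⟨a, ⟨ha, fun a' ha' => ?_⟩, b, ⟨hb, fun b' hb' => ?_⟩, rfl⟩
    · simpa using hmax (a' + b) (add_mem_add ha' hb)
    · simpa using hmax (a + b') (add_mem_add ha hb')
  · rintro ⟨a, ⟨ha, hamax⟩, b, ⟨hb, hbmax⟩, rfl⟩
    refine ⟨add_mem_add ha hb, ?_⟩
    rintro _ ⟨a', ha', b', hb', rfl⟩
    simpa using add_le_add (hamax a' ha') (hbmax b' hb')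

theorem toExposed_convexHull (l : StrongDual ℝ E) (s : Set E) :
    l.toExposed (convexHull ℝ s) = convexHull ℝ (l.toExposed s) := by
  have hexp : IsExposed ℝ (convexHull ℝ s) (l.toExposed (convexHull ℝ s)) :=
    toExposed.isExposed
  refine subset_antisymm (fun x hx => ?_) (convexHull_min ?_ (hexp.convex (convex_convexHull ℝ s)))
  · refine convexHull_mono ?_ (hexp.isExtreme.inter_convexHull_subset (convex_convexHull ℝ s)
      (subset_convexHull ℝ s) ⟨hx, hx.1⟩)
    rintro y ⟨hys, hyF⟩
    exact ⟨hys, fun z hz => hyF.2 z (subset_convexHull ℝ s hz)⟩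
  · rintro x ⟨hxs, hmax⟩
    exact ⟨subset_convexHull ℝ s hxs, fun y hy => le_of_mem_convexHull hmax hy⟩

theorem toExposed_nonempty (l : StrongDual ℝ E) {s : Set E} (hs : s.Finite) (hne : s.Nonempty) :
    (l.toExposed s).Nonempty :=
  let ⟨x, hxs, hmax⟩ := s.exists_max_image l hs hne
  ⟨x, hxs, hmax⟩

theorem eventually_toExposed_add_smul {s : Set E} (hs : s.Finite) (l₁ l₂ : StrongDual ℝ E) :
    ∀ᶠ ε in 𝓝[>] (0 : ℝ), (l₁ + ε • l₂).toExposed s = l₂.toExposed (l₁.toExposed s) := by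
  have hlt : ∀ᶠ ε in 𝓝 (0 : ℝ), ∀ x ∈ s, ∀ y ∈ s,
      l₁ x < l₁ y → l₁ x + ε * l₂ x < l₁ y + ε * l₂ y := by
    refine hs.eventually_all.2 fun x _ => hs.eventually_all.2 fun y _ =>
      eventually_imp_distrib_left.2 fun hxy => ContinuousAt.eventually_lt ?_ ?_ (by simpa using hxy)
    all_goals fun_prop
  filter_upwards [nhdsWithin_le_nhds hlt, self_mem_nhdsWithin] with ε hε (hεpos : 0 < ε)
  ext x
  simp only [toExposed, mem_ofPred_eq, add_apply, smul_apply, smul_eq_mul]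
  constructor
  · rintro ⟨hxs, hmax⟩
    have h₁ : ∀ y ∈ s, l₁ y ≤ l₁ x := fun y hy =>
      not_lt.1 fun h => (hε x hxs y hy h).not_ge (hmax y hy)
    refine ⟨⟨hxs, h₁⟩, fun y ⟨hys, hy₁⟩ => le_of_mul_le_mul_left ?_ hεpos⟩
    linarith [hmax y hys, h₁ y hys, hy₁ x hxs]
  · rintro ⟨⟨hxs, h₁⟩, h₂⟩
    refine ⟨hxs, fun y hys => ?_⟩
    rcases (h₁ y hys).lt_or_eq with hlt | heq
    · exact (hε y hys x hxs hlt).le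
    · have := h₂ y ⟨hys, fun z hz => heq ▸ h₁ z hz⟩
      nlinarith

end ContinuousLinearMap

open ContinuousLinearMap

section Normed

variable {E : Type*} [NormedAddCommGroup E] [NormedSpace ℝ E]

theorem IsExtreme.exists_forall_lt_of_notMem_segment {s : Set E} (hs : s.Finite) {v w : E}
    (hext : IsExtreme ℝ (convexHull ℝ s) (segment ℝ v w)) :
    ∃ l : StrongDual ℝ E, l (w - v) = 0 ∧ ∀ x ∈ s, x ∉ segment ℝ v w → l x < l v := by
  rcases (s \ segment ℝ v w).eq_empty_or_nonempty with hempty | ⟨z, hz⟩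
  · exact ⟨0, rfl, fun x hx hxv => (hempty.subset ⟨hx, hxv⟩).elim⟩
  have hvK : v ∉ convexHull ℝ (s \ segment ℝ v w) + ((ℝ ∙ (w - v) : Submodule ℝ E) : Set E) := by
    rintro ⟨y, hy, _, hr, hv⟩
    obtain ⟨r, rfl⟩ := Submodule.mem_span_singleton.1 hr
    have hyline : y = v + (-r) • (w - v) := by
      rw [neg_smul, ← sub_eq_add_neg]; exact eq_sub_of_add_eq hv
    have hyC : y ∈ convexHull ℝ s := convexHull_mono sdiff_subset hy
    rw [hyline] at hyC
    have hyseg := hyline ▸ hext.mem_segment_of_mem_line hyC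
    have := hext.inter_convexHull_subset (convex_convexHull ℝ s)
      (sdiff_subset.trans (subset_convexHull ℝ s)) ⟨hyseg, hy⟩
    simp at this
  obtain ⟨l, c, hlK, hlv⟩ := geometric_hahn_banach_closed_point
    ((convex_convexHull ℝ _).add (Submodule.convex _))
    ((Submodule.closed_of_finiteDimensional _).add_left_of_isCompact
      (hs.sdiff.isCompact_convexHull ℝ)) hvK
  -- `l < c` on the whole line `z + ℝ (w - v)`
  have hlu : l (w - v) = 0 := by
    by_contra hne
    have := hlK (z + ((c - l z) / l (w - v)) • (w - v))
      (add_mem_add (subset_convexHull ℝ _ hz)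
        (Submodule.smul_mem _ _ (Submodule.mem_span_singleton_self _)))
    rw [map_add, map_smul, smul_eq_mul, div_mul_cancel₀ _ hne] at this
    linarith
  refine ⟨l, hlu, fun x hx hxv => (hlK x ?_).trans hlv⟩
  simpa using add_mem_add (subset_convexHull ℝ _ (show x ∈ s \ segment ℝ v w from ⟨hx, hxv⟩))
    (zero_mem (ℝ ∙ (w - v)))

theorem IsExtreme.exists_toExposed_convexHull_eq_segment {s : Set E} (hs : s.Finite) {v w : E}
    (hext : IsExtreme ℝ (convexHull ℝ s) (segment ℝ v w)) :
    ∃ l : StrongDual ℝ E, l.toExposed (convexHull ℝ s) = segment ℝ v w := by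
  obtain ⟨l, hlu, hlt⟩ := hext.exists_forall_lt_of_notMem_segment hs
  have hseg : ∀ x ∈ segment ℝ v w, l x = l v := fun x => apply_eq_of_mem_segment hlu
  have hle : ∀ x ∈ s, l x ≤ l v := fun x hx => by
    by_cases hxv : x ∈ segment ℝ v w
    exacts [(hseg x hxv).le, (hlt x hx hxv).le]
  refine ⟨l, subset_antisymm ?_ fun x hx =>
    ⟨hext.subset hx, fun y hy => (le_of_mem_convexHull hle hy).trans (hseg x hx).ge⟩⟩
  rw [toExposed_convexHull]
  refine convexHull_min (fun x ⟨hxs, hmax⟩ => ?_) (convex_segment v w)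
  by_contra hxv
  exact (hlt x hxs hxv).not_ge
    (le_of_mem_convexHull hmax (hext.subset (left_mem_segment ℝ v w)))

theorem IsCompact.exists_eq_segment_of_subset_line {K : Set E} (hK : IsCompact K)
    (hconv : Convex ℝ K) (hne : K.Nonempty) {p u : E} (hu : u ≠ 0)
    (hline : K ⊆ AffineSubspace.mk' p (ℝ ∙ u)) :
    ∃ a b : ℝ, a ≤ b ∧ K = segment ℝ (p + a • u) (p + b • u) := by
  set f : ℝ →ᵃ[ℝ] E := AffineMap.lineMap p (p + u)
  have hf : ∀ t : ℝ, f t = p + t • u := fun t => by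
    simp [f, AffineMap.lineMap_apply, add_comm]
  have hrange : K ⊆ range f := fun x hx => by
    obtain ⟨t, ht⟩ := Submodule.mem_span_singleton.1 (AffineSubspace.mem_mk'.1 (hline hx))
    exact ⟨t, by rw [hf, ht, vsub_eq_sub, add_sub_cancel]⟩
  have hfemb : Topology.IsClosedEmbedding f := by
    rw [show ⇑f = (p + ·) ∘ (· • u) from funext hf]
    exact (Homeomorph.addLeft p).isClosedEmbedding.comp (isClosedEmbedding_smul_left hu)
  set T := f ⁻¹' K
  have hTcpt : IsCompact T := hfemb.isCompact_preimage hK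
  have hTne : T.Nonempty := by
    obtain ⟨x, hx⟩ := hne
    obtain ⟨t, rfl⟩ := hrange hx
    exact ⟨t, hx⟩
  have hTIcc := eq_Icc_of_connected_compact ⟨hTne, (hconv.affine_preimage f).isPreconnected⟩ hTcpt
  have hab : sInf T ≤ sSup T := csInf_le_csSup hTne hTcpt.bddBelow hTcpt.bddAbove
  refine ⟨sInf T, sSup T, hab, ?_⟩
  rw [← hf, ← hf, ← image_segment, segment_eq_Icc hab, ← hTIcc, image_preimage_eq_of_subset hrange]

end Normed

section InnerProduct

variable {F : Type*} [NormedAddCommGroup F] [InnerProductSpace ℝ F]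

open RealInnerProductSpace

theorem eq_of_norm_le_of_norm_sq_le_inner {p q : F} (hp : ‖p‖ ≤ ‖q‖) (h : ‖q‖ ^ 2 ≤ ⟪q, p⟫) :
    p = q := by
  have hsq : ‖p - q‖ ^ 2 ≤ 0 := by
    rw [norm_sub_sq_real, real_inner_comm]
    nlinarith [norm_nonneg p, norm_nonneg q]
  rw [← sub_eq_zero, ← norm_eq_zero]
  exact pow_eq_zero_iff two_ne_zero |>.1 (le_antisymm hsq (sq_nonneg _))

theorem exists_toExposed_subset_line {s : Set F} (hs : s.Finite) (hne : s.Nonempty) (u : F) :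
    ∃ l : StrongDual ℝ F, l u = 0 ∧
      ∃ b ∈ l.toExposed s, l.toExposed s ⊆ AffineSubspace.mk' b (ℝ ∙ u) := by
  set P := (ℝ ∙ u)ᗮ.orthogonalProjectionOnto
  have hker : ∀ x, P x = 0 ↔ x ∈ ℝ ∙ u := fun x => by
    rw [Submodule.orthogonalProjectionOnto_eq_zero_iff, Submodule.orthogonal_orthogonal]
  obtain ⟨b, hbs, hbmax⟩ := s.exists_max_image (fun x => ‖P x‖) hs hne
  set q := P b
  have hlq : ∀ x, ((innerSL ℝ q).comp P) x = ⟪q, P x⟫ := fun _ => rfl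
  have hb : b ∈ ((innerSL ℝ q).comp P).toExposed s := by
    refine ⟨hbs, fun y hy => ?_⟩
    rw [hlq, hlq, real_inner_self_eq_norm_mul_norm]
    exact (real_inner_le_norm _ _).trans (mul_le_mul_of_nonneg_left (hbmax y hy) (norm_nonneg _))
  refine ⟨(innerSL ℝ q).comp P, by simp [hlq, (hker u).2 (Submodule.mem_span_singleton_self u)],
    b, hb, fun x hx => ?_⟩
  have hPx : P x = q := eq_of_norm_le_of_norm_sq_le_inner (hbmax x hx.1) (by
    rw [← real_inner_self_eq_norm_sq, ← hlq, ← hlq]; exact hx.2 b hbs)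
  rw [SetLike.mem_coe, AffineSubspace.mem_mk', vsub_eq_sub, ← hker, map_sub, hPx, sub_self]

theorem exists_toExposed_convexHull_eq_segment_and_subset_line {Sb Sc : Set F} (hSb : Sb.Finite)
    (hSbne : Sb.Nonempty) (hSc : Sc.Finite) {v w : F}
    (hext : IsExtreme ℝ (convexHull ℝ Sc) (segment ℝ v w)) :
    ∃ (l : StrongDual ℝ F), l.toExposed (convexHull ℝ Sc) = segment ℝ v w ∧
      ∃ b ∈ l.toExposed (convexHull ℝ Sb),
        l.toExposed (convexHull ℝ Sb) ⊆ AffineSubspace.mk' b (ℝ ∙ (w - v)) := by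
  obtain ⟨l₁, hl₁⟩ := hext.exists_toExposed_convexHull_eq_segment hSc
  obtain ⟨l₂, hl₂u, b, hb, hl₂⟩ := exists_toExposed_subset_line (hSb.subset (sep_subset _ _))
    (l₁.toExposed_nonempty hSb hSbne) (w - v)
  obtain ⟨ε, hεB, hεC⟩ := ((eventually_toExposed_add_smul hSb l₁ l₂).and
    (eventually_toExposed_add_smul hSc l₁ l₂)).exists
  refine ⟨l₁ + ε • l₂, ?_, b, ?_, ?_⟩ <;> rw [toExposed_convexHull]
  · have hsub : l₁.toExposed Sc ⊆ segment ℝ v w :=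
      hl₁ ▸ toExposed_convexHull l₁ Sc ▸ subset_convexHull ℝ _
    rw [hεC, toExposed_eq_self_of_forall_eq fun x hx y hy => ?_, ← toExposed_convexHull, hl₁]
    rw [apply_eq_of_mem_segment hl₂u (hsub hx), apply_eq_of_mem_segment hl₂u (hsub hy)]
  · exact hεB ▸ subset_convexHull ℝ _ hb
  · exact hεB ▸ convexHull_min hl₂ (AffineSubspace.convex _)

theorem exists_parallel_edge_convexHull_add {Sb Sc : Set F} (hSb : Sb.Finite)
    (hSbne : Sb.Nonempty) (hSc : Sc.Finite) {v w : F} (hvw : v ≠ w)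
    (hext : IsExtreme ℝ (convexHull ℝ Sc) (segment ℝ v w)) :
    ∃ x y, x ≠ y ∧ IsExtreme ℝ (convexHull ℝ Sb + convexHull ℝ Sc) (segment ℝ x y) ∧
      ∃ t : ℝ, 0 < t ∧ w - v = t • (y - x) := by
  have hu : w - v ≠ 0 := sub_ne_zero.2 hvw.symm
  obtain ⟨l, hC, b, hb, hB⟩ :=
    exists_toExposed_convexHull_eq_segment_and_subset_line hSb hSbne hSc hext
  have hexp : IsExposed ℝ (convexHull ℝ Sb + convexHull ℝ Sc)
      (l.toExposed (convexHull ℝ Sb + convexHull ℝ Sc)) := toExposed.isExposed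
  rw [toExposed_add, hC] at hexp
  have hline : l.toExposed (convexHull ℝ Sb) + segment ℝ v w ⊆
      AffineSubspace.mk' (b + v) (ℝ ∙ (w - v)) := by
    rintro _ ⟨x, hx, _, hy, rfl⟩
    rw [segment_eq_image'] at hy
    obtain ⟨r, -, rfl⟩ := hy
    have hxb : x - b ∈ ℝ ∙ (w - v) := AffineSubspace.mem_mk'.1 (hB hx)
    rw [SetLike.mem_coe, AffineSubspace.mem_mk', vsub_eq_sub,
      show x + (v + r • (w - v)) - (b + v) = x - b + r • (w - v) by abel]
    exact add_mem hxb (Submodule.smul_mem _ r (Submodule.mem_span_singleton_self _))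
  have hbv := add_mem_add hb (left_mem_segment ℝ v w)
  have hbw := add_mem_add hb (right_mem_segment ℝ v w)
  obtain ⟨a, c, hac, hseg⟩ := IsCompact.exists_eq_segment_of_subset_line
    (hexp.isCompact ((hSb.isCompact_convexHull ℝ).add (hSc.isCompact_convexHull ℝ)))
    (hexp.convex ((convex_convexHull ℝ _).add (convex_convexHull ℝ _))) ⟨_, hbv⟩ hu hline
  have hac : a < c := hac.lt_of_ne <| by
    rintro rfl
    rw [hseg, segment_same] at hbv hbw
    exact hvw (add_left_cancel (hbv.trans hbw.symm))
  refine ⟨_, _, fun h => hac.ne (smul_left_injective ℝ hu (add_left_cancel h)),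
    hseg ▸ hexp.isExtreme, (c - a)⁻¹, inv_pos.2 (sub_pos.2 hac), ?_⟩
  rw [show b + v + c • (w - v) - (b + v + a • (w - v)) = (c - a) • (w - v) by module, smul_smul,
    inv_mul_cancel₀ (sub_pos.2 hac).ne', one_smul]

end InnerProduct

theorem minkowski_difference_edge_directions_general {d : ℕ}
    (A B C : Set (EuclideanSpace ℝ (Fin d)))
    (hB : IsPolytope B) (hC : IsPolytope C)
    (hsum : A = B + C) :
    ∀ e, IsEdgeDir C e → IsEdgeDir A e := by
  obtain ⟨Sb, hSbne, rfl⟩ := hB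
  obtain ⟨Sc, -, rfl⟩ := hC
  rintro e ⟨v, w, ⟨hvw, hext⟩, t, ht, rfl⟩
  obtain ⟨x, y, hxy, hedge, s, hs, hwv⟩ := exists_parallel_edge_convexHull_add Sb.finite_toSet
    hSbne Sc.finite_toSet hvw hext
  exact ⟨x, y, ⟨hxy, hsum ▸ hedge⟩, t * s, mul_pos ht hs, by rw [hwv, smul_smul]⟩

theorem minkowski_difference_edge_directions {d : ℕ}
    (A B C : Set (EuclideanSpace ℝ (Fin d)))
    (hA : IsPolytope A) (hB : IsPolytope B) (hC : IsPolytope C)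
    (hsum : A = B + C) :
    ∀ e, IsEdgeDir C e → IsEdgeDir A e :=
  minkowski_difference_edge_directions_general A B C hB hC hsum
end

section
/- Let P ⊆ ℝ^d be a polytope with 0 ∈ P, let V ⊆ P be a finite set such that P ⊆ cone(V), and let w ∈ V with w ≠ 0. Suppose that (i) t·w ∉ P for all t > 1 (w is the farthest point of P on the ray {t·w : t ≥ 0}), and (ii) there exists ā ∈ ℝ^d with ā·w = 0, with ā·q ≥ 0 for all q ∈ V, and such that every q ∈ V with ā·q = 0 is a nonnegative scalar multiple of w. Then P ∩ {x ∈ ℝ^d : ā·x = 0} = [0, w], and consequently the segment [0, w] is an edge of P. -/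
open scoped BigOperators RealInnerProductSpace

/-!
Every point of `P` is a nonnegative combination of points of `V`, on which `⟪a, ·⟫` is
nonnegative; so `⟪a, ·⟫ ≥ 0` on `P`, and a point of `P` on the hyperplane `⟪a, ·⟫ = 0` only
uses generators on that hyperplane, i.e. nonnegative multiples of `w`. By (i) such a point is
`t • w` with `t ≤ 1`, so `P` meets the hyperplane in `[0, w]`. The face of `P` cut out by a
supporting hyperplane is extreme.
-/

section InnerProductSpace

variable {F : Type*} [NormedAddCommGroup F] [InnerProductSpace ℝ F]

theorem real_inner_sum_smul (a : F) (s : Finset F) (c : F → ℝ) :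
    ⟪a, ∑ v ∈ s, c v • v⟫ = ∑ v ∈ s, c v * ⟪a, v⟫ := by
  simp only [inner_sum, real_inner_smul_right]

theorem isExtreme_inter_inner_eq_zero {A : Set F} {a : F} (ha : ∀ x ∈ A, 0 ≤ ⟪a, x⟫) :
    IsExtreme ℝ A (A ∩ {x | ⟪a, x⟫ = 0}) := by
  refine ⟨Set.inter_subset_left, ?_⟩
  rintro x₁ hx₁ x₂ hx₂ x ⟨-, hxa⟩ ⟨u, v, hu, hv, -, rfl⟩
  have hsum : u * ⟪a, x₁⟫ + v * ⟪a, x₂⟫ = 0 := by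
    rw [← hxa, inner_add_right, real_inner_smul_right, real_inner_smul_right]
  have h₁ := ha x₁ hx₁
  have h₂ := ha x₂ hx₂
  exact ⟨hx₁, show ⟪a, x₁⟫ = 0 by nlinarith⟩

theorem inter_inner_eq_zero_eq_segment {P : Set F} {a w : F} (hP : Convex ℝ P)
    (h0 : (0 : F) ∈ P) (hw : w ∈ P) (hfar : ∀ t : ℝ, 1 < t → t • w ∉ P) (haw : ⟪a, w⟫ = 0)
    (hray : ∀ x ∈ P, ⟪a, x⟫ = 0 → ∃ t : ℝ, 0 ≤ t ∧ x = t • w) :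
    P ∩ {x | ⟪a, x⟫ = 0} = segment ℝ 0 w := by
  refine subset_antisymm ?_ (Set.subset_inter (hP.segment_subset h0 hw) ?_)
  · rintro x ⟨hxP, hxa⟩
    obtain ⟨t, ht, rfl⟩ := hray x hxP hxa
    have ht₁ : t ≤ 1 := not_lt.mp fun h => hfar t h hxP
    exact ⟨1 - t, t, by linarith, ht, by ring, by simp⟩
  · exact (convex_hyperplane (innerₛₗ ℝ a).isLinear 0).segment_subset (inner_zero_right a) haw

end InnerProductSpace

section Cone

variable {d : ℕ} {V : Set (EuclideanSpace ℝ (Fin d))} {a x : EuclideanSpace ℝ (Fin d)}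

theorem inner_nonneg_of_mem_coneOf (ha : ∀ q ∈ V, 0 ≤ ⟪a, q⟫) (hx : x ∈ coneOf V) :
    0 ≤ ⟪a, x⟫ := by
  obtain ⟨s, c, hsV, hc, rfl⟩ := hx
  rw [real_inner_sum_smul]
  exact Finset.sum_nonneg fun v hv => mul_nonneg (hc v hv) (ha v (hsV hv))

theorem exists_nonneg_smul_of_mem_coneOf {w : EuclideanSpace ℝ (Fin d)}
    (ha : ∀ q ∈ V, 0 ≤ ⟪a, q⟫) (hzero : ∀ q ∈ V, ⟪a, q⟫ = 0 → ∃ t : ℝ, 0 ≤ t ∧ q = t • w)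
    (hx : x ∈ coneOf V) (hxa : ⟪a, x⟫ = 0) : ∃ t : ℝ, 0 ≤ t ∧ x = t • w := by
  obtain ⟨s, c, hsV, hc, rfl⟩ := hx
  have hterms : ∀ v ∈ s, 0 ≤ c v * ⟪a, v⟫ := fun v hv => mul_nonneg (hc v hv) (ha v (hsV hv))
  rw [real_inner_sum_smul, Finset.sum_eq_zero_iff_of_nonneg hterms] at hxa
  refine Finset.sum_induction _ (fun y => ∃ t : ℝ, 0 ≤ t ∧ y = t • w)
    (fun _ _ ⟨t₁, ht₁, e₁⟩ ⟨t₂, ht₂, e₂⟩ => ⟨t₁ + t₂, add_nonneg ht₁ ht₂, by rw [e₁, e₂, add_smul]⟩)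
    ⟨0, le_rfl, (zero_smul ℝ w).symm⟩ fun v hv => ?_
  rcases mul_eq_zero.mp (hxa v hv) with hcv | hav
  · exact ⟨0, le_rfl, by rw [hcv, zero_smul, zero_smul]⟩
  · obtain ⟨t, ht, rfl⟩ := hzero v (hsV hv) hav
    exact ⟨c (t • w) * t, mul_nonneg (hc _ hv) ht, smul_smul _ _ _⟩

end Cone

theorem extremal_ray_gives_edge_general {d : ℕ}
    (P : Set (EuclideanSpace ℝ (Fin d))) (hP : IsPolytope P)
    (h0 : (0 : EuclideanSpace ℝ (Fin d)) ∈ P)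
    (V : Finset (EuclideanSpace ℝ (Fin d)))
    (hVP : (V : Set (EuclideanSpace ℝ (Fin d))) ⊆ P)
    (hPcone : P ⊆ coneOf (V : Set (EuclideanSpace ℝ (Fin d))))
    (w : EuclideanSpace ℝ (Fin d)) (hwV : w ∈ V)
    (hfar : ∀ t : ℝ, 1 < t → t • w ∉ P)
    (a : EuclideanSpace ℝ (Fin d))
    (haw : ⟪a, w⟫ = 0)
    (hanonneg : ∀ q ∈ V, 0 ≤ ⟪a, q⟫)
    (hazero : ∀ q ∈ V, ⟪a, q⟫ = 0 → ∃ t : ℝ, 0 ≤ t ∧ q = t • w) :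
    P ∩ {x | ⟪a, x⟫ = 0} = segment ℝ 0 w ∧ IsExtreme ℝ P (segment ℝ 0 w) := by
  obtain ⟨S, -, rfl⟩ := hP
  have hseg := inter_inner_eq_zero_eq_segment (convex_convexHull ℝ _) h0 (hVP hwV) hfar haw
    fun x hx => exists_nonneg_smul_of_mem_coneOf hanonneg hazero (hPcone hx)
  exact ⟨hseg, hseg ▸ isExtreme_inter_inner_eq_zero fun x hx =>
    inner_nonneg_of_mem_coneOf hanonneg (hPcone hx)⟩

theorem extremal_ray_gives_edge {d : ℕ}
    (P : Set (EuclideanSpace ℝ (Fin d))) (hP : IsPolytope P)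
    (h0 : (0 : EuclideanSpace ℝ (Fin d)) ∈ P)
    (V : Finset (EuclideanSpace ℝ (Fin d)))
    (hVP : (V : Set (EuclideanSpace ℝ (Fin d))) ⊆ P)
    (hPcone : P ⊆ coneOf (V : Set (EuclideanSpace ℝ (Fin d))))
    (w : EuclideanSpace ℝ (Fin d)) (hwV : w ∈ V) (hw0 : w ≠ 0)
    (hfar : ∀ t : ℝ, 1 < t → t • w ∉ P)
    (a : EuclideanSpace ℝ (Fin d))
    (haw : ⟪a, w⟫ = 0)
    (hanonneg : ∀ q ∈ V, 0 ≤ ⟪a, q⟫)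
    (hazero : ∀ q ∈ V, ⟪a, q⟫ = 0 → ∃ t : ℝ, 0 ≤ t ∧ q = t • w) :
    P ∩ {x | ⟪a, x⟫ = 0} = segment ℝ 0 w ∧ IsExtreme ℝ P (segment ℝ 0 w) :=
  extremal_ray_gives_edge_general P hP h0 V hVP hPcone w hwV hfar a haw hanonneg hazero
end
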